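/- Let p > 1 be real, let c, β be real numbers with c² < 1 and β < 2√(1−c²). Suppose φ : ℝ → ℝ is a Schwartz function satisfying the solitary-wave equation φ''''(x) + βφ''(x) + (1−c²)φ(x) = |φ(x)|^{p−1}φ(x) for all x ∈ ℝ. Then the Pohozaev identity holds: ∫_ℝ [ 3(φ''(x))² − β(φ'(x))² − (1−c²)φ(x)² + (2/(p+1))|φ(x)|^{p+1} ] dx = 0. -/

import Mathlib

open MeasureTheory Filter

lemma schwartz_decay (φ : SchwartzMap ℝ ℝ) (k n : ℕ) :
    ∃ C : ℝ, 0 < C ∧ ∀ x : ℝ, |x| ^ k * |iteratedDeriv n (⇑φ) x| ≤ C := by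
  obtain ⟨C, hC, h⟩ := φ.decay k n
  refine ⟨C, hC, fun x => ?_⟩
  simpa [Real.norm_eq_abs, norm_iteratedFDeriv_eq_norm_iteratedDeriv] using h x

lemma tendsto_zero_of_abs_mul_bound {g : ℝ → ℝ} {C : ℝ}
    (h : ∀ x, |x| * |g x| ≤ C) :
    Tendsto g atTop (nhds 0) ∧ Tendsto g atBot (nhds 0) := by
  have hb : ∀ x : ℝ, 1 ≤ |x| → ‖g x‖ ≤ C * |x|⁻¹ := by
    intro x hx
    have hx0 : (0:ℝ) < |x| := by linarith
    have h' := h x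
    rw [mul_comm] at h'
    rw [Real.norm_eq_abs]
    calc |g x| = |g x| * |x| * |x|⁻¹ := by field_simp
    _ ≤ C * |x|⁻¹ := mul_le_mul_of_nonneg_right h' (by positivity)
  have h1 : Tendsto (fun x : ℝ => |x|⁻¹) atTop (nhds 0) :=
    tendsto_inv_atTop_zero.comp tendsto_abs_atTop_atTop
  have h2 : Tendsto (fun x : ℝ => |x|⁻¹) atBot (nhds 0) :=
    tendsto_inv_atTop_zero.comp tendsto_abs_atBot_atTop
  have habs : Tendsto (fun x : ℝ => C * |x|⁻¹) atTop (nhds 0) := by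
    have := h1.const_mul C; rwa [mul_zero] at this
  have habs' : Tendsto (fun x : ℝ => C * |x|⁻¹) atBot (nhds 0) := by
    have := h2.const_mul C; rwa [mul_zero] at this
  constructor
  · refine squeeze_zero_norm' ?_ habs
    filter_upwards [eventually_ge_atTop (1:ℝ)] with x hx
    exact hb x (by rw [abs_of_nonneg (by linarith)]; exact hx)
  · refine squeeze_zero_norm' ?_ habs'
    filter_upwards [eventually_le_atBot (-1:ℝ)] with x hx
    exact hb x (by rw [abs_of_nonpos (by linarith)]; linarith)

lemma integrable_of_one_add_sq_bound {f : ℝ → ℝ} {C : ℝ} (hf : Continuous f)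
    (h : ∀ x, (1 + x ^ 2) * |f x| ≤ C) : Integrable f := by
  refine (integrable_inv_one_add_sq.const_mul C).mono' hf.aestronglyMeasurable ?_
  filter_upwards with x
  have h1 : (0:ℝ) < 1 + x ^ 2 := by positivity
  rw [Real.norm_eq_abs]
  calc |f x| = (1 + x ^ 2) * |f x| * (1 + x ^ 2)⁻¹ := by field_simp
  _ ≤ C * (1 + x ^ 2)⁻¹ := mul_le_mul_of_nonneg_right (h x) (by positivity)

lemma my_hasDerivAt_abs_rpow {p : ℝ} (hp : 1 < p) (u : ℝ) :
    HasDerivAt (fun y : ℝ => |y| ^ (p + 1)) ((p + 1) * |u| ^ (p - 1) * u) u := by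
  have hq : (1:ℝ) ≤ (p + 1) / 2 := by linarith
  have h2 : HasDerivAt (fun y : ℝ => y ^ 2) (2 * u) u := by
    simpa using hasDerivAt_pow 2 u
  have h3 : HasDerivAt (fun y : ℝ => (y ^ 2 : ℝ) ^ ((p + 1) / 2))
      ((2 * u) * ((p + 1) / 2) * (u ^ 2 : ℝ) ^ ((p + 1) / 2 - 1)) u :=
    h2.rpow_const (Or.inr hq)
  have key : ∀ y : ℝ, (y ^ 2 : ℝ) ^ ((p + 1) / 2) = |y| ^ (p + 1) := by
    intro y
    rw [show y ^ 2 = |y| ^ (2:ℕ) by rw [sq_abs], ← Real.rpow_natCast |y| 2,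
      ← Real.rpow_mul (abs_nonneg y)]
    congr 1; ring
  have key2 : (u ^ 2 : ℝ) ^ ((p + 1) / 2 - 1) = |u| ^ (p - 1) := by
    rw [show u ^ 2 = |u| ^ (2:ℕ) by rw [sq_abs], ← Real.rpow_natCast |u| 2,
      ← Real.rpow_mul (abs_nonneg u)]
    ring_nf
  have h4 : HasDerivAt (fun y : ℝ => |y| ^ (p + 1))
      ((2 * u) * ((p + 1) / 2) * (u ^ 2 : ℝ) ^ ((p + 1) / 2 - 1)) u := by
    refine h3.congr_of_eventuallyEq ?_
    filter_upwards with y using (key y).symm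
  convert h4 using 1
  rw [key2]; ring

lemma abs_rpow_le_sq {p M : ℝ} (hp : 1 < p) (u : ℝ) (hu : |u| ≤ M) :
    |u| ^ (p + 1) ≤ M ^ (p - 1) * u ^ 2 := by
  have h0 : (0:ℝ) ≤ |u| := abs_nonneg u
  have h1 : |u| ^ (p + 1) = |u| ^ (p - 1) * u ^ 2 := by
    rw [show p + 1 = (p - 1) + 2 by ring, Real.rpow_add' h0 (by intro h; linarith)]
    congr 1
    rw [show ((2:ℝ) : ℝ) = ((2:ℕ) : ℝ) by norm_num, Real.rpow_natCast, sq_abs]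
  rw [h1]
  exact mul_le_mul_of_nonneg_right
    (Real.rpow_le_rpow h0 hu (by linarith)) (sq_nonneg u)

lemma integrable_sq_of_decay {f : ℝ → ℝ} {C0 C2 : ℝ} (hf : Continuous f)
    (h0 : ∀ x, |f x| ≤ C0) (h2 : ∀ x : ℝ, |x| ^ 2 * |f x| ≤ C2) :
    Integrable (fun x => (f x) ^ 2) := by
  have hC0 : 0 ≤ C0 := le_trans (abs_nonneg _) (h0 0)
  have hC2 : 0 ≤ C2 := le_trans (by positivity) (h2 0)
  apply integrable_of_one_add_sq_bound (C := C0 * C0 + C2 * C0) (hf.pow 2)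
  intro x
  have e1 : |f x| * |f x| ≤ C0 * C0 := mul_le_mul (h0 x) (h0 x) (abs_nonneg _) hC0
  have e2 : (|x| ^ 2 * |f x|) * |f x| ≤ C2 * C0 :=
    mul_le_mul (h2 x) (h0 x) (abs_nonneg _) hC2
  have key : (1 + x ^ 2) * |(f x) ^ 2| = |f x| * |f x| + (|x| ^ 2 * |f x|) * |f x| := by
    rw [abs_of_nonneg (sq_nonneg _), ← sq_abs (f x), ← sq_abs x]; ring
  rw [Pi.pow_apply, key]; exact add_le_add e1 e2

/-- Pohozaev identity for Schwartz solutions of the solitary-wave equation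
`φ'''' + βφ'' + (1−c²)φ = |φ|^{p−1}φ` of the sixth-order Boussinesq equation. -/
theorem pohozaev_identity (p c β : ℝ) (hp : 1 < p) (hc : c ^ 2 < 1)
    (hβ : β < 2 * Real.sqrt (1 - c ^ 2)) (φ : SchwartzMap ℝ ℝ)
    (hφ : ∀ x : ℝ, iteratedDeriv 4 (⇑φ) x + β * iteratedDeriv 2 (⇑φ) x
      + (1 - c ^ 2) * φ x = |φ x| ^ (p - 1) * φ x) :
    ∫ x : ℝ, (3 * (iteratedDeriv 2 (⇑φ) x) ^ 2 - β * (deriv (⇑φ) x) ^ 2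
      - (1 - c ^ 2) * (φ x) ^ 2 + (2 / (p + 1)) * |φ x| ^ (p + 1)) = 0 := by
  have hp1 : p + 1 ≠ 0 := by intro h; linarith
  have hp1' : (0:ℝ) ≤ 2 / (p + 1) := div_nonneg (by norm_num) (by linarith)
  have hsm := φ.smooth ⊤
  -- derivatives
  have hder : ∀ (n : ℕ) (x : ℝ),
      HasDerivAt (iteratedDeriv n (⇑φ)) (iteratedDeriv (n + 1) (⇑φ) x) x := by
    intro n x
    have hdiff : DifferentiableAt ℝ (iteratedDeriv n (⇑φ)) x :=
      (hsm.differentiable_iteratedDeriv n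
        (by exact_mod_cast WithTop.coe_lt_top n)).differentiableAt
    rw [iteratedDeriv_succ]
    exact hdiff.hasDerivAt
  have h0 : ∀ x : ℝ, HasDerivAt (⇑φ) (deriv (⇑φ) x) x :=
    fun x => φ.differentiableAt.hasDerivAt
  have h1 : ∀ x : ℝ, HasDerivAt (deriv (⇑φ)) (iteratedDeriv 2 (⇑φ) x) x := by
    intro x
    have := hder 1 x
    rwa [iteratedDeriv_one] at this
  have h2 : ∀ x : ℝ, HasDerivAt (iteratedDeriv 2 (⇑φ)) (iteratedDeriv 3 (⇑φ) x) x :=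
    fun x => hder 2 x
  have h3 : ∀ x : ℝ, HasDerivAt (iteratedDeriv 3 (⇑φ)) (iteratedDeriv 4 (⇑φ) x) x :=
    fun x => hder 3 x
  have hA : ∀ x : ℝ, HasDerivAt (fun y => |φ y| ^ (p + 1))
      ((p + 1) * |φ x| ^ (p - 1) * φ x * deriv (⇑φ) x) x :=
    fun x => (my_hasDerivAt_abs_rpow hp (φ x)).comp x (h0 x)
  -- continuity
  have hcont : ∀ n : ℕ, Continuous (iteratedDeriv n (⇑φ)) :=
    fun n => hsm.continuous_iteratedDeriv n (by exact_mod_cast le_top)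
  have hcont1 : Continuous (deriv (⇑φ)) := by
    have := hcont 1; rwa [iteratedDeriv_one] at this
  -- decay constants
  obtain ⟨C00, hC00pos, hC00⟩ := schwartz_decay φ 0 0
  obtain ⟨C20, hC20pos, hC20⟩ := schwartz_decay φ 2 0
  obtain ⟨C01, hC01pos, hC01⟩ := schwartz_decay φ 0 1
  obtain ⟨C11, hC11pos, hC11⟩ := schwartz_decay φ 1 1
  obtain ⟨C21, hC21pos, hC21⟩ := schwartz_decay φ 2 1
  obtain ⟨C02, hC02pos, hC02⟩ := schwartz_decay φ 0 2
  obtain ⟨C22, hC22pos, hC22⟩ := schwartz_decay φ 2 2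
  obtain ⟨C03, hC03pos, hC03⟩ := schwartz_decay φ 0 3
  simp only [iteratedDeriv_zero, iteratedDeriv_one, pow_zero, pow_one, one_mul]
    at hC00 hC20 hC01 hC11 hC21 hC02 hC03
  have hKbound : ∀ x : ℝ, |φ x| ^ (p + 1) ≤ C00 ^ (p - 1) * (φ x) ^ 2 :=
    fun x => abs_rpow_le_sq hp (φ x) (hC00 x)
  have hC00rnn : (0:ℝ) ≤ C00 ^ (p - 1) := Real.rpow_nonneg (le_of_lt hC00pos) _
  -- the potential G with G' = integrand
  set G : ℝ → ℝ := fun y => -(2 * y * deriv (⇑φ) y * iteratedDeriv 3 (⇑φ) y)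
      + 2 * deriv (⇑φ) y * iteratedDeriv 2 (⇑φ) y
      + y * (iteratedDeriv 2 (⇑φ) y) ^ 2
      - β * y * (deriv (⇑φ) y) ^ 2
      - (1 - c ^ 2) * y * (φ y) ^ 2
      + (2 / (p + 1)) * y * |φ y| ^ (p + 1) with hGdef
  have hG : ∀ x : ℝ, HasDerivAt G
      (3 * (iteratedDeriv 2 (⇑φ) x) ^ 2 - β * (deriv (⇑φ) x) ^ 2
        - (1 - c ^ 2) * (φ x) ^ 2 + (2 / (p + 1)) * |φ x| ^ (p + 1)) x := by
    intro x
    have T1 : HasDerivAt (fun y => 2 * y * deriv (⇑φ) y * iteratedDeriv 3 (⇑φ) y)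
        (2 * deriv (⇑φ) x * iteratedDeriv 3 (⇑φ) x
          + 2 * x * iteratedDeriv 2 (⇑φ) x * iteratedDeriv 3 (⇑φ) x
          + 2 * x * deriv (⇑φ) x * iteratedDeriv 4 (⇑φ) x) x := by
      have := (((hasDerivAt_id x).const_mul (2:ℝ)).mul (h1 x)).mul (h3 x)
      exact this.congr_deriv (by simp only [id_eq, Pi.pow_apply, Pi.mul_apply]; ring)
    have T2 : HasDerivAt (fun y => 2 * deriv (⇑φ) y * iteratedDeriv 2 (⇑φ) y)
        (2 * iteratedDeriv 2 (⇑φ) x * iteratedDeriv 2 (⇑φ) x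
          + 2 * deriv (⇑φ) x * iteratedDeriv 3 (⇑φ) x) x := by
      have := ((h1 x).const_mul (2:ℝ)).mul (h2 x)
      exact this.congr_deriv (by ring)
    have T3 : HasDerivAt (fun y => y * (iteratedDeriv 2 (⇑φ) y) ^ 2)
        ((iteratedDeriv 2 (⇑φ) x) ^ 2
          + 2 * x * iteratedDeriv 2 (⇑φ) x * iteratedDeriv 3 (⇑φ) x) x := by
      have := (hasDerivAt_id x).mul ((h2 x).pow 2)
      exact this.congr_deriv (by simp only [id_eq, Pi.pow_apply, Pi.mul_apply]; ring)
    have T4 : HasDerivAt (fun y => β * y * (deriv (⇑φ) y) ^ 2)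
        (β * (deriv (⇑φ) x) ^ 2
          + 2 * β * x * deriv (⇑φ) x * iteratedDeriv 2 (⇑φ) x) x := by
      have := ((hasDerivAt_id x).const_mul β).mul ((h1 x).pow 2)
      exact this.congr_deriv (by simp only [id_eq, Pi.pow_apply, Pi.mul_apply]; ring)
    have T5 : HasDerivAt (fun y => (1 - c ^ 2) * y * (φ y) ^ 2)
        ((1 - c ^ 2) * (φ x) ^ 2
          + 2 * (1 - c ^ 2) * x * φ x * deriv (⇑φ) x) x := by
      have := ((hasDerivAt_id x).const_mul (1 - c ^ 2)).mul ((h0 x).pow 2)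
      exact this.congr_deriv (by simp only [id_eq, Pi.pow_apply, Pi.mul_apply]; ring)
    have T6 : HasDerivAt (fun y => (2 / (p + 1)) * y * |φ y| ^ (p + 1))
        ((2 / (p + 1)) * |φ x| ^ (p + 1)
          + (2 / (p + 1)) * x * ((p + 1) * |φ x| ^ (p - 1) * φ x * deriv (⇑φ) x)) x := by
      have := ((hasDerivAt_id x).const_mul (2 / (p + 1))).mul (hA x)
      exact this.congr_deriv (by simp only [id_eq, Pi.pow_apply, Pi.mul_apply]; ring)
    have sum := ((((T1.neg.add T2).add T3).sub T4).sub T5).add T6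
    rw [hGdef]
    refine sum.congr_deriv ?_
    have hf4 : iteratedDeriv 4 (⇑φ) x = |φ x| ^ (p - 1) * φ x
        - β * iteratedDeriv 2 (⇑φ) x - (1 - c ^ 2) * φ x := by linarith [hφ x]
    rw [hf4]
    field_simp
    ring
  -- tendsto of G at ±∞
  have t1 := tendsto_zero_of_abs_mul_bound (C := 2 * (C21 * C03))
    (g := fun y => -(2 * y * deriv (⇑φ) y * iteratedDeriv 3 (⇑φ) y)) (by
      intro x
      have key : |x| * |-(2 * x * deriv (⇑φ) x * iteratedDeriv 3 (⇑φ) x)|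
          = 2 * ((|x| ^ 2 * |deriv (⇑φ) x|) * |iteratedDeriv 3 (⇑φ) x|) := by
        rw [abs_neg, abs_mul, abs_mul, abs_mul, abs_two]; ring
      rw [key]
      exact mul_le_mul_of_nonneg_left
        (mul_le_mul (hC21 x) (hC03 x) (abs_nonneg _) (le_of_lt hC21pos)) (by norm_num))
  have t2 := tendsto_zero_of_abs_mul_bound (C := 2 * (C11 * C02))
    (g := fun y => 2 * deriv (⇑φ) y * iteratedDeriv 2 (⇑φ) y) (by
      intro x
      have key : |x| * |2 * deriv (⇑φ) x * iteratedDeriv 2 (⇑φ) x|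
          = 2 * ((|x| * |deriv (⇑φ) x|) * |iteratedDeriv 2 (⇑φ) x|) := by
        rw [abs_mul, abs_mul, abs_two]; ring
      rw [key]
      exact mul_le_mul_of_nonneg_left
        (mul_le_mul (hC11 x) (hC02 x) (abs_nonneg _) (le_of_lt hC11pos)) (by norm_num))
  have t3 := tendsto_zero_of_abs_mul_bound (C := C22 * C02)
    (g := fun y => y * (iteratedDeriv 2 (⇑φ) y) ^ 2) (by
      intro x
      have key : |x| * |x * (iteratedDeriv 2 (⇑φ) x) ^ 2|
          = (|x| ^ 2 * |iteratedDeriv 2 (⇑φ) x|) * |iteratedDeriv 2 (⇑φ) x| := by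
        rw [abs_mul, abs_of_nonneg (sq_nonneg (iteratedDeriv 2 (⇑φ) x)),
          ← sq_abs (iteratedDeriv 2 (⇑φ) x)]; ring
      rw [key]
      exact mul_le_mul (hC22 x) (hC02 x) (abs_nonneg _) (le_of_lt hC22pos))
  have t4 := tendsto_zero_of_abs_mul_bound (C := |β| * (C21 * C01))
    (g := fun y => β * y * (deriv (⇑φ) y) ^ 2) (by
      intro x
      have key : |x| * |β * x * (deriv (⇑φ) x) ^ 2|
          = |β| * ((|x| ^ 2 * |deriv (⇑φ) x|) * |deriv (⇑φ) x|) := by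
        rw [abs_mul, abs_mul, abs_of_nonneg (sq_nonneg (deriv (⇑φ) x)),
          ← sq_abs (deriv (⇑φ) x)]; ring
      rw [key]
      exact mul_le_mul_of_nonneg_left
        (mul_le_mul (hC21 x) (hC01 x) (abs_nonneg _) (le_of_lt hC21pos)) (abs_nonneg β))
  have t5 := tendsto_zero_of_abs_mul_bound (C := |1 - c ^ 2| * (C20 * C00))
    (g := fun y => (1 - c ^ 2) * y * (φ y) ^ 2) (by
      intro x
      have key : |x| * |(1 - c ^ 2) * x * (φ x) ^ 2|
          = |1 - c ^ 2| * ((|x| ^ 2 * |φ x|) * |φ x|) := by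
        rw [abs_mul, abs_mul, abs_of_nonneg (sq_nonneg (φ x)), ← sq_abs (φ x)]; ring
      rw [key]
      exact mul_le_mul_of_nonneg_left
        (mul_le_mul (hC20 x) (hC00 x) (abs_nonneg _) (le_of_lt hC20pos)) (abs_nonneg _))
  have t6 := tendsto_zero_of_abs_mul_bound
    (C := (2 / (p + 1)) * (C00 ^ (p - 1) * (C20 * C00)))
    (g := fun y => (2 / (p + 1)) * y * |φ y| ^ (p + 1)) (by
      intro x
      have hx2 : x ^ 2 * |φ x| ^ (p + 1) ≤ C00 ^ (p - 1) * (C20 * C00) := by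
        have hh1 : x ^ 2 * |φ x| ^ (p + 1) ≤ x ^ 2 * (C00 ^ (p - 1) * (φ x) ^ 2) :=
          mul_le_mul_of_nonneg_left (hKbound x) (sq_nonneg x)
        have hh2 : (|x| ^ 2 * |φ x|) * |φ x| ≤ C20 * C00 :=
          mul_le_mul (hC20 x) (hC00 x) (abs_nonneg _) (le_of_lt hC20pos)
        have e : x ^ 2 * (C00 ^ (p - 1) * (φ x) ^ 2)
            = C00 ^ (p - 1) * ((|x| ^ 2 * |φ x|) * |φ x|) := by
          rw [← sq_abs (φ x), ← sq_abs x]; ring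
        calc x ^ 2 * |φ x| ^ (p + 1) ≤ x ^ 2 * (C00 ^ (p - 1) * (φ x) ^ 2) := hh1
        _ = C00 ^ (p - 1) * ((|x| ^ 2 * |φ x|) * |φ x|) := e
        _ ≤ C00 ^ (p - 1) * (C20 * C00) := mul_le_mul_of_nonneg_left hh2 hC00rnn
      have key : |x| * |(2 / (p + 1)) * x * |φ x| ^ (p + 1)|
          = (2 / (p + 1)) * (x ^ 2 * |φ x| ^ (p + 1)) := by
        rw [abs_mul, abs_mul, abs_of_nonneg (Real.rpow_nonneg (abs_nonneg _) _),
          abs_of_nonneg hp1', ← sq_abs x]; ring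
      rw [key]
      exact mul_le_mul_of_nonneg_left hx2 hp1')
  have htop : Tendsto G atTop (nhds 0) := by
    rw [hGdef]
    simpa using ((((t1.1.add t2.1).add t3.1).sub t4.1).sub t5.1).add t6.1
  have hbot : Tendsto G atBot (nhds 0) := by
    rw [hGdef]
    simpa using ((((t1.2.add t2.2).add t3.2).sub t4.2).sub t5.2).add t6.2
  -- integrability of the integrand
  have int2 : Integrable (fun x => (iteratedDeriv 2 (⇑φ) x) ^ 2) :=
    integrable_sq_of_decay (hcont 2) hC02 hC22
  have int1 : Integrable (fun x => (deriv (⇑φ) x) ^ 2) :=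
    integrable_sq_of_decay hcont1 hC01 (fun x => hC21 x)
  have int0 : Integrable (fun x => (φ x) ^ 2) :=
    integrable_sq_of_decay φ.continuous hC00 hC20
  have intA : Integrable (fun x => |φ x| ^ (p + 1)) := by
    apply integrable_of_one_add_sq_bound
      (C := C00 ^ (p - 1) * (C00 * C00 + C20 * C00))
      (continuous_iff_continuousAt.2 (fun x => (hA x).continuousAt))
    intro x
    have hb : (1 + x ^ 2) * (φ x) ^ 2 ≤ C00 * C00 + C20 * C00 := by
      have e1 : |φ x| * |φ x| ≤ C00 * C00 :=
        mul_le_mul (hC00 x) (hC00 x) (abs_nonneg _) (le_of_lt hC00pos)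
      have e2 : (|x| ^ 2 * |φ x|) * |φ x| ≤ C20 * C00 :=
        mul_le_mul (hC20 x) (hC00 x) (abs_nonneg _) (le_of_lt hC20pos)
      have key : (1 + x ^ 2) * (φ x) ^ 2
          = |φ x| * |φ x| + (|x| ^ 2 * |φ x|) * |φ x| := by
        rw [← sq_abs (φ x), ← sq_abs x]; ring
      rw [key]; exact add_le_add e1 e2
    calc (1 + x ^ 2) * abs (|φ x| ^ (p + 1))
        = (1 + x ^ 2) * |φ x| ^ (p + 1) := by
          rw [abs_of_nonneg (Real.rpow_nonneg (abs_nonneg _) _)]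
    _ ≤ (1 + x ^ 2) * (C00 ^ (p - 1) * (φ x) ^ 2) :=
          mul_le_mul_of_nonneg_left (hKbound x) (by positivity)
    _ = C00 ^ (p - 1) * ((1 + x ^ 2) * (φ x) ^ 2) := by ring
    _ ≤ C00 ^ (p - 1) * (C00 * C00 + C20 * C00) :=
          mul_le_mul_of_nonneg_left hb hC00rnn
  have hI : Integrable (fun x => 3 * (iteratedDeriv 2 (⇑φ) x) ^ 2
      - β * (deriv (⇑φ) x) ^ 2 - (1 - c ^ 2) * (φ x) ^ 2
      + (2 / (p + 1)) * |φ x| ^ (p + 1)) :=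
    (((int2.const_mul 3).sub (int1.const_mul β)).sub
      (int0.const_mul (1 - c ^ 2))).add (intA.const_mul (2 / (p + 1)))
  -- FTC on both half-lines
  have keyIoi : (∫ x in Set.Ioi (0:ℝ), (3 * (iteratedDeriv 2 (⇑φ) x) ^ 2
      - β * (deriv (⇑φ) x) ^ 2 - (1 - c ^ 2) * (φ x) ^ 2
      + (2 / (p + 1)) * |φ x| ^ (p + 1))) = 0 - G 0 :=
    integral_Ioi_of_hasDerivAt_of_tendsto' (fun x _ => hG x) hI.integrableOn htop
  have keyIic : (∫ x in Set.Iic (0:ℝ), (3 * (iteratedDeriv 2 (⇑φ) x) ^ 2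
      - β * (deriv (⇑φ) x) ^ 2 - (1 - c ^ 2) * (φ x) ^ 2
      + (2 / (p + 1)) * |φ x| ^ (p + 1))) = G 0 - 0 :=
    integral_Iic_of_hasDerivAt_of_tendsto' (fun x _ => hG x) hI.integrableOn hbot
  rw [← intervalIntegral.integral_Iic_add_Ioi (b := (0:ℝ)) hI.integrableOn hI.integrableOn,
    keyIic, keyIoi]
  ring
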